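/- Let N ≥ 1 and let γ : [0,1] → ℝ^N be a C¹ path with γ(0) = p and γ(1) = q, p ≠ q, such that each component function γᵢ : [0,1] → ℝ is monotone. Then the 2-energy satisfies E₂ = ∫₀¹ s(t)²·‖γ'(t)‖₂ dt ≥ (1/3)·‖q − p‖₃³ = (1/3)·Σᵢ₌₁^N |qᵢ − pᵢ|³, where s(t) = ∫₀ᵗ ‖γ'(u)‖₂ du is the arc-length function. -/

import Mathlib

/-!
Substituting `u = s t` turns the energy into `∫₀^L u² du = L³ / 3`, where `L = s 1` is the length
of the path. The length dominates the chord, `‖q - p‖₂ ≤ L`, and every coordinate of a vector is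
bounded by its Euclidean norm, so `∑ᵢ |xᵢ|³ ≤ ‖x‖₂ · ∑ᵢ |xᵢ|² = ‖x‖₂³`.
-/

open Set intervalIntegral

theorem EuclideanSpace.sum_abs_pow_le_norm_pow {ι : Type*} [Fintype ι] (x : EuclideanSpace ℝ ι)
    (k : ℕ) : ∑ i, |x i| ^ (k + 2) ≤ ‖x‖ ^ (k + 2) :=
  calc ∑ i, |x i| ^ (k + 2) = ∑ i, |x i| ^ k * |x i| ^ 2 := by simp only [pow_add]
    _ ≤ ∑ i, ‖x‖ ^ k * |x i| ^ 2 := by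
      gcongr with i
      exact PiLp.norm_apply_le x i
    _ = ‖x‖ ^ (k + 2) := by
      rw [← Finset.mul_sum, pow_add, EuclideanSpace.real_norm_sq_eq]
      simp only [sq_abs]

theorem norm_sub_le_integral_norm_derivWithin {E : Type*} [NormedAddCommGroup E]
    [NormedSpace ℝ E] [CompleteSpace E] {f : ℝ → E} {a b : ℝ}
    (hf : ContDiffOn ℝ 1 f (Icc a b)) (hab : a ≤ b) :
    ‖f b - f a‖ ≤ ∫ t in a..b, ‖derivWithin f (Icc a b) t‖ := by
  rw [← integral_derivWithin_Icc_of_contDiffOn_Icc hf hab]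
  exact norm_integral_le_integral_norm hab

theorem hasDerivAt_integral_of_continuousOn_Icc {g : ℝ → ℝ} {a b t : ℝ}
    (hg : ContinuousOn g (Icc a b)) (ht : t ∈ Ioo a b) :
    HasDerivAt (fun x => ∫ u in a..x, g u) (g t) t := by
  have hint : IntervalIntegrable g MeasureTheory.volume a t :=
    (hg.mono (Icc_subset_Icc le_rfl ht.2.le)).intervalIntegrable_of_Icc ht.1.le
  exact integral_hasDerivAt_right hint
    ((hg.mono Ioo_subset_Icc_self).stronglyMeasurableAtFilter isOpen_Ioo t ht)
    (hg.continuousAt (Icc_mem_nhds ht.1 ht.2))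

theorem integral_primitive_sq_mul {g : ℝ → ℝ} {a b : ℝ} (hg : ContinuousOn g (Icc a b))
    (hab : a ≤ b) :
    ∫ t in a..b, (∫ u in a..t, g u) ^ 2 * g t = (∫ u in a..b, g u) ^ 3 / 3 := by
  have hg' : ContinuousOn g (uIcc a b) := by rwa [uIcc_of_le hab]
  have hprim : ContinuousOn (fun x => ∫ u in a..x, g u) (uIcc a b) :=
    continuousOn_primitive_interval (hg'.integrableOn_compact isCompact_uIcc)
  have hderiv : ∀ t ∈ Ioo (min a b) (max a b),
      HasDerivWithinAt (fun x => ∫ u in a..x, g u) (g t) (Ioi t) t := by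
    rw [min_eq_left hab, max_eq_right hab]
    exact fun t ht => (hasDerivAt_integral_of_continuousOn_Icc hg ht).hasDerivWithinAt
  have hsubst := integral_comp_mul_deriv'' (g := fun u => u ^ 2) hprim hderiv hg' (continuousOn_pow 2)
  simp only [Function.comp_def] at hsubst
  rw [hsubst, integral_pow, integral_same]
  ring

theorem stmt_4_general (N : ℕ) (γ : ℝ → EuclideanSpace ℝ (Fin N))
    (p q : EuclideanSpace ℝ (Fin N))
    (hγ : ContDiffOn ℝ 1 γ (Set.Icc 0 1))
    (h0 : γ 0 = p) (h1 : γ 1 = q)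
    (s : ℝ → ℝ)
    (hs : ∀ t, s t = ∫ u in (0:ℝ)..t, ‖derivWithin γ (Set.Icc 0 1) u‖) :
    (1 / 3) * ∑ i : Fin N, |q i - p i| ^ 3 ≤
      ∫ t in (0:ℝ)..1, s t ^ 2 * ‖derivWithin γ (Set.Icc 0 1) t‖ := by
  obtain rfl : s = fun t => ∫ u in (0:ℝ)..t, ‖derivWithin γ (Icc 0 1) u‖ := funext hs
  subst h0 h1
  have hspeed : ContinuousOn (fun t => ‖derivWithin γ (Icc 0 1) t‖) (Icc 0 1) :=
    (hγ.continuousOn_derivWithin (uniqueDiffOn_Icc one_pos) le_rfl).norm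
  rw [integral_primitive_sq_mul hspeed zero_le_one]
  calc (1 / 3) * ∑ i, |γ 1 i - γ 0 i| ^ 3 ≤ (1 / 3) * ‖γ 1 - γ 0‖ ^ 3 := by
        gcongr
        exact (γ 1 - γ 0).sum_abs_pow_le_norm_pow 1
    _ ≤ (1 / 3) * (∫ u in (0:ℝ)..1, ‖derivWithin γ (Icc 0 1) u‖) ^ 3 := by
        gcongr
        exact norm_sub_le_integral_norm_derivWithin hγ zero_le_one
    _ = _ := by ring

/-- Theorem 2: for a C¹ path `γ : [0,1] → ℝ^N` from `p` to `q` (`p ≠ q`) each of whose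
component functions is monotone, the 2-energy `E₂ = ∫₀¹ s(t)²·‖γ'(t)‖₂ dt` satisfies
`E₂ ≥ (1/3)·‖q − p‖₃³ = (1/3)·Σᵢ |qᵢ − pᵢ|³`, where `s` is the arc-length function. -/
theorem stmt_4 (N : ℕ) (hN : 1 ≤ N) (γ : ℝ → EuclideanSpace ℝ (Fin N))
    (p q : EuclideanSpace ℝ (Fin N))
    (hγ : ContDiffOn ℝ 1 γ (Set.Icc 0 1))
    (h0 : γ 0 = p) (h1 : γ 1 = q) (hpq : p ≠ q)
    (hmono : ∀ i : Fin N, MonotoneOn (fun t => γ t i) (Set.Icc 0 1) ∨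
      AntitoneOn (fun t => γ t i) (Set.Icc 0 1))
    (s : ℝ → ℝ)
    (hs : ∀ t, s t = ∫ u in (0:ℝ)..t, ‖derivWithin γ (Set.Icc 0 1) u‖) :
    (1 / 3) * ∑ i : Fin N, |q i - p i| ^ 3 ≤
      ∫ t in (0:ℝ)..1, s t ^ 2 * ‖derivWithin γ (Set.Icc 0 1) t‖ :=
  stmt_4_general N γ p q hγ h0 h1 s hs
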